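/- Let A be an n×n real matrix with singular value decomposition A = U S V^T, and suppose the nonzero singular values are s_1, ..., s_k. For even L, there exist matrices W_1, ..., W_L (as in the diagonal-interpolation construction) with W_L ⋯ W_1 = A and Σ_ℓ ‖W_ℓ‖_F^2 = L·Tr[S_+^{2/L}] = L·k + 2 Σ_i log s_i + (1/(2L)) Σ_i (2 log s_i)^2 + O(L^{-2}). -/

import Mathlib

open Matrix Finset

theorem Matrix.isHermitian_transpose_mul_self {m n α : Type*} [Fintype m] [CommSemiring α]
    [StarRing α] [TrivialStar α] (A : Matrix m n α) : (Aᵀ * A).IsHermitian := by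
  simpa [conjTranspose_eq_transpose_of_trivial] using isHermitian_conjTranspose_mul_self A

/-- The singular values of a real matrix, listed in decreasing order (square roots of the
eigenvalues of `Aᵀ A`, sorted). -/
noncomputable def singularValues {m n : ℕ} (A : Matrix (Fin m) (Fin n) ℝ) : Fin n → ℝ :=
  fun i => Real.sqrt (((Matrix.isHermitian_transpose_mul_self A).eigenvalues ∘
    Tuple.sort ((Matrix.isHermitian_transpose_mul_self A).eigenvalues)) i.rev)

/-- The `i`-th largest singular value (0-indexed), zero-padded beyond the matrix dimensions. -/
noncomputable def sval {m n : ℕ} (A : Matrix (Fin m) (Fin n) ℝ) (i : ℕ) : ℝ :=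
  if h : i < n then singularValues A ⟨i, h⟩ else 0


/-- The product `W_ℓ ⋯ W_1`. -/
def matProd {n : ℕ} (W : ℕ → Matrix (Fin n) (Fin n) ℝ) : ℕ → Matrix (Fin n) (Fin n) ℝ
  | 0 => 1
  | ℓ + 1 => W (ℓ + 1) * matProd W ℓ

/-!
Diagonalize `AᵀA = V diag(λ) Vᵀ` with `V` orthogonal. The lower `L - 1` layers are
`(AᵀA)^(1/2L)` and the top layer is `A (AᵀA)^(-(L-1)/2L)`, with `0^t = 0` for `t ≠ 0`; the
product is `A` because `A` vanishes on the kernel of `AᵀA`. Each layer has squared Frobenius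
norm `∑ λᵢ^(1/L) = ∑ sᵢ^(2/L)`. Writing `sᵢ^(2/L) = exp (2 log sᵢ / L)`, the expansion is the
Taylor bound `|eˣ - 1 - x - x²/2| ≤ |x|³ e^|x|` at `x = 2 log sᵢ / L`.
-/

theorem Real.abs_exp_sub_sum_range_le (x : ℝ) (n : ℕ) :
    |Real.exp x - ∑ k ∈ range n, x ^ k / k.factorial| ≤ |x| ^ n * Real.exp |x| := by
  have h := Complex.norm_exp_sub_sum_le_norm_mul_exp (x : ℂ) n
  rw [Complex.norm_real, Real.norm_eq_abs] at h
  exact_mod_cast h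

theorem abs_mul_exp_div_sub_le (u : ℝ) {L : ℝ} (hL : 1 ≤ L) :
    |L * Real.exp (u / L) - (L + u + u ^ 2 / (2 * L))| ≤ |u| ^ 3 * Real.exp |u| / L ^ 2 := by
  have hL0 : 0 < L := by linarith
  have htaylor : |Real.exp (u / L) - (1 + u / L + (u / L) ^ 2 / 2)| ≤
      |u / L| ^ 3 * Real.exp |u / L| := by
    simpa [sum_range_succ, Nat.factorial] using Real.abs_exp_sub_sum_range_le (u / L) 3
  have hexp : Real.exp |u / L| ≤ Real.exp |u| := by
    rw [Real.exp_le_exp, abs_div, abs_of_pos hL0]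
    exact div_le_self (abs_nonneg u) hL
  calc |L * Real.exp (u / L) - (L + u + u ^ 2 / (2 * L))|
      = |L * (Real.exp (u / L) - (1 + u / L + (u / L) ^ 2 / 2))| := by congr 1; field_simp
    _ = L * |Real.exp (u / L) - (1 + u / L + (u / L) ^ 2 / 2)| := by
        rw [abs_mul, abs_of_pos hL0]
    _ ≤ L * (|u / L| ^ 3 * Real.exp |u|) := by gcongr; exact htaylor.trans (by gcongr)
    _ = |u| ^ 3 * Real.exp |u| / L ^ 2 := by
        rw [abs_div, abs_of_pos hL0]; field_simp

theorem abs_mul_rpow_two_div_sub_le {s : ℝ} (hs : 0 < s) {L : ℝ} (hL : 1 ≤ L) :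
    |L * s ^ (2 / L) - (L + 2 * Real.log s + 1 / (2 * L) * (2 * Real.log s) ^ 2)| ≤
      |2 * Real.log s| ^ 3 * Real.exp |2 * Real.log s| / L ^ 2 := by
  convert abs_mul_exp_div_sub_le (2 * Real.log s) hL using 3
  · rw [Real.rpow_def_of_pos hs]; ring_nf
  · ring

theorem abs_sum_mul_rpow_two_div_sub_le {ι : Type*} (S : Finset ι) {s : ι → ℝ}
    (hs : ∀ i ∈ S, 0 < s i) {L : ℝ} (hL : 1 ≤ L) :
    |L * ∑ i ∈ S, s i ^ (2 / L) - (L * #S + 2 * ∑ i ∈ S, Real.log (s i) +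
        1 / (2 * L) * ∑ i ∈ S, (2 * Real.log (s i)) ^ 2)| ≤
      (∑ i ∈ S, |2 * Real.log (s i)| ^ 3 * Real.exp |2 * Real.log (s i)|) / L ^ 2 := by
  have hsplit : L * ∑ i ∈ S, s i ^ (2 / L) - (L * #S + 2 * ∑ i ∈ S, Real.log (s i) +
        1 / (2 * L) * ∑ i ∈ S, (2 * Real.log (s i)) ^ 2) =
      ∑ i ∈ S, (L * s i ^ (2 / L) -
        (L + 2 * Real.log (s i) + 1 / (2 * L) * (2 * Real.log (s i)) ^ 2)) := by
    simp only [sum_sub_distrib, sum_add_distrib, mul_sum, sum_const, nsmul_eq_mul]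
    ring
  rw [hsplit, sum_div]
  exact (abs_sum_le_sum_abs _ _).trans
    (sum_le_sum fun i hi => abs_mul_rpow_two_div_sub_le (hs i hi) hL)

namespace Matrix

variable {k m : Type*} [Fintype k] [Fintype m]

theorem sum_sq_eq_trace_transpose_mul_self (M : Matrix k m ℝ) :
    ∑ i, ∑ j, M i j ^ 2 = trace (Mᵀ * M) := by
  simp only [trace, mul_apply, diag_apply, transpose_apply, sq]
  exact sum_comm

variable [DecidableEq m]

theorem exists_transpose_mul_self_eq_conj_diagonal (A : Matrix k m ℝ) :
    ∃ V : Matrix m m ℝ, Vᵀ * V = 1 ∧ V * Vᵀ = 1 ∧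
      Aᵀ * A = V * diagonal (isHermitian_transpose_mul_self A).eigenvalues * Vᵀ := by
  set hA := isHermitian_transpose_mul_self A
  have hV := hA.eigenvectorUnitary.2
  have hstar : star (hA.eigenvectorUnitary : Matrix m m ℝ) = (hA.eigenvectorUnitary)ᵀ := by
    rw [star_eq_conjTranspose, conjTranspose_eq_transpose_of_trivial]
  refine ⟨hA.eigenvectorUnitary, ?_, ?_, ?_⟩
  · rw [← hstar]; exact mem_unitaryGroup_iff'.mp hV
  · rw [← hstar]; exact mem_unitaryGroup_iff.mp hV
  · have h := hA.spectral_theorem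
    rw [Unitary.conjStarAlgAut_apply, hstar] at h
    simpa [RCLike.ofReal_real_eq_id] using h

section Conjugation

variable {V : Matrix m m ℝ} (hV : Vᵀ * V = 1)

theorem transpose_conj_diagonal (d : m → ℝ) : (V * diagonal d * Vᵀ)ᵀ = V * diagonal d * Vᵀ := by
  simp [transpose_mul, mul_assoc]

include hV

theorem trace_conj_diagonal (d : m → ℝ) : trace (V * diagonal d * Vᵀ) = ∑ i, d i := by
  rw [trace_mul_cycle, hV, one_mul, trace_diagonal]

theorem conj_diagonal_mul_conj_diagonal (d e : m → ℝ) :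
    V * diagonal d * Vᵀ * (V * diagonal e * Vᵀ) = V * diagonal (d * e) * Vᵀ := by
  calc V * diagonal d * Vᵀ * (V * diagonal e * Vᵀ)
      = V * diagonal d * (Vᵀ * V) * diagonal e * Vᵀ := by simp only [mul_assoc]
    _ = V * diagonal (d * e) * Vᵀ := by rw [hV, mul_one, mul_assoc V, diagonal_mul_diagonal]; rfl

theorem conj_diagonal_pow (hV' : V * Vᵀ = 1) (d : m → ℝ) (p : ℕ) :
    (V * diagonal d * Vᵀ) ^ p = V * diagonal (d ^ p) * Vᵀ := by
  induction p with
  | zero => simpa using hV'.symm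
  | succ p ih => rw [pow_succ, ih, conj_diagonal_mul_conj_diagonal hV, pow_succ]

theorem sum_sq_conj_diagonal (d : m → ℝ) :
    ∑ i, ∑ j, (V * diagonal d * Vᵀ) i j ^ 2 = ∑ i, d i ^ 2 := by
  rw [sum_sq_eq_trace_transpose_mul_self, transpose_conj_diagonal,
    conj_diagonal_mul_conj_diagonal hV, trace_conj_diagonal hV]
  simp [sq]

variable {A : Matrix k m ℝ} {ev : m → ℝ} (hA : Aᵀ * A = V * diagonal ev * Vᵀ)
include hA

theorem sum_sq_mul_conj_diagonal (d : m → ℝ) :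
    ∑ i, ∑ j, (A * (V * diagonal d * Vᵀ)) i j ^ 2 = ∑ i, ev i * d i ^ 2 := by
  rw [sum_sq_eq_trace_transpose_mul_self, transpose_mul, transpose_conj_diagonal,
    Matrix.mul_assoc, ← Matrix.mul_assoc Aᵀ, hA, conj_diagonal_mul_conj_diagonal hV,
    conj_diagonal_mul_conj_diagonal hV, trace_conj_diagonal hV]
  simp only [Pi.mul_apply, sq]
  exact sum_congr rfl fun i _ => by ring

theorem mul_apply_eq_zero_of_eigenvalue_eq_zero {j : m} (hj : ev j = 0) (i : k) :
    (A * V) i j = 0 := by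
  have hgram : (A * V)ᵀ * (A * V) = (Vᵀ * V) * diagonal ev * (Vᵀ * V) := by
    rw [transpose_mul, Matrix.mul_assoc, ← Matrix.mul_assoc Aᵀ, hA]
    simp only [Matrix.mul_assoc]
  have hcol := congrFun (congrFun hgram j) j
  rw [hV, one_mul, mul_one, diagonal_apply_eq, hj, mul_apply] at hcol
  simp only [transpose_apply] at hcol
  exact mul_self_eq_zero.mp <|
    (sum_eq_zero_iff_of_nonneg fun i _ => mul_self_nonneg _).mp hcol i (mem_univ i)

theorem mul_conj_diagonal_congr {d e : m → ℝ} (h : ∀ i, ev i ≠ 0 → d i = e i) :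
    A * (V * diagonal d * Vᵀ) = A * (V * diagonal e * Vᵀ) := by
  have hcol : A * V * diagonal d = A * V * diagonal e := by
    ext i j
    rw [mul_diagonal, mul_diagonal]
    by_cases hj : ev j = 0
    · rw [mul_apply_eq_zero_of_eigenvalue_eq_zero hV hA hj, zero_mul, zero_mul]
    · rw [h j hj]
  rw [← Matrix.mul_assoc, ← Matrix.mul_assoc, hcol, ← Matrix.mul_assoc, ← Matrix.mul_assoc]

end Conjugation

end Matrix

theorem matProd_eq_pow {n : ℕ} {W : ℕ → Matrix (Fin n) (Fin n) ℝ} {B : Matrix (Fin n) (Fin n) ℝ}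
    {p : ℕ} (hW : ∀ ℓ ∈ Icc 1 p, W ℓ = B) : matProd W p = B ^ p := by
  induction p with
  | zero => rfl
  | succ p ih =>
    rw [matProd, hW (p + 1) (by simp), ih fun ℓ hℓ => hW ℓ (Icc_subset_Icc_right p.le_succ hℓ),
      pow_succ']

theorem exists_matProd_eq_and_sum_sq_eq {n : ℕ} (A : Matrix (Fin n) (Fin n) ℝ) {L : ℕ}
    (hL : 0 < L) :
    ∃ W : ℕ → Matrix (Fin n) (Fin n) ℝ, matProd W L = A ∧
      ∑ ℓ ∈ Icc 1 L, ∑ i, ∑ j, W ℓ i j ^ 2 =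
        L * ∑ i, (isHermitian_transpose_mul_self A).eigenvalues i ^ (1 / L : ℝ) := by
  obtain ⟨V, hV, hV', hA⟩ := exists_transpose_mul_self_eq_conj_diagonal A
  set ev := (isHermitian_transpose_mul_self A).eigenvalues
  have hev : ∀ i, 0 ≤ ev i := eigenvalues_conjTranspose_mul_self_nonneg A
  obtain ⟨M, rfl⟩ : ∃ M, L = M + 1 := ⟨L - 1, by omega⟩
  set B := V * diagonal (fun i => ev i ^ (1 / (2 * (M + 1)) : ℝ)) * Vᵀ
  set T := A * (V * diagonal (fun i => ev i ^ (-M / (2 * (M + 1)) : ℝ)) * Vᵀ)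
  refine ⟨fun ℓ => if ℓ ≤ M then B else T, ?_, ?_⟩
  · have hlow : matProd (fun ℓ => if ℓ ≤ M then B else T) M = B ^ M :=
      matProd_eq_pow fun ℓ hℓ => if_pos (mem_Icc.mp hℓ).2
    have htop : T * B ^ M = A := by
      rw [conj_diagonal_pow hV hV', Matrix.mul_assoc, conj_diagonal_mul_conj_diagonal hV,
        mul_conj_diagonal_congr hV hA (e := fun _ => 1), diagonal_one, Matrix.mul_one, hV',
        Matrix.mul_one]
      intro i hi
      have hpos := (hev i).lt_of_ne' hi
      simp only [Pi.mul_apply, Pi.pow_apply, ← Real.rpow_mul_natCast (hev i),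
        ← Real.rpow_add hpos]
      convert Real.rpow_zero (ev i) using 2
      field_simp
      ring
    simpa [matProd, hlow] using htop
  · have hlayer : ∀ ℓ ∈ Icc 1 (M + 1),
        ∑ i, ∑ j, (if ℓ ≤ M then B else T) i j ^ 2 = ∑ i, ev i ^ (1 / (M + 1 : ℕ) : ℝ) := by
      intro ℓ _
      split_ifs
      · rw [sum_sq_conj_diagonal hV]
        refine sum_congr rfl fun i _ => ?_
        rw [← Real.rpow_mul_natCast (hev i)]
        congr 1
        push_cast
        field_simp
      · rw [sum_sq_mul_conj_diagonal hV hA]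
        refine sum_congr rfl fun i _ => ?_
        have hexp : 1 + -M / (2 * (M + 1)) * ((2 : ℕ) : ℝ) = 1 / (M + 1 : ℕ) := by
          push_cast
          field_simp
          ring
        rw [← Real.rpow_mul_natCast (hev i),
          ← Real.rpow_one_add' (hev i) (by rw [hexp]; positivity), hexp]
    rw [sum_congr rfl hlayer, sum_const, Nat.card_Icc, add_tsub_cancel_right, nsmul_eq_mul]

theorem sum_filter_singularValues_ne_zero_rpow {m n : ℕ} (A : Matrix (Fin m) (Fin n) ℝ) {q : ℝ}
    (hq : q ≠ 0) :
    ∑ i ∈ univ.filter (fun i => singularValues A i ≠ 0), singularValues A i ^ q =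
      ∑ i, (isHermitian_transpose_mul_self A).eigenvalues i ^ (q / 2) := by
  set ev := (isHermitian_transpose_mul_self A).eigenvalues
  have hev : ∀ i, 0 ≤ ev i := eigenvalues_conjTranspose_mul_self_nonneg A
  rw [sum_filter_of_ne fun i _ h => by contrapose! h; rw [h, Real.zero_rpow hq]]
  refine (Equiv.sum_comp (Fin.revPerm.trans (Tuple.sort ev)) fun j => √(ev j) ^ q).trans ?_
  refine sum_congr rfl fun j _ => ?_
  rw [Real.sqrt_eq_rpow, ← Real.rpow_mul (hev j)]
  ring_nf

/-- For a square matrix `A` with nonzero singular values `s₁,…,s_k`, for every even depth `L`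
there exist `W_1,…,W_L` with `W_L ⋯ W_1 = A` and
`∑_ℓ ‖W_ℓ‖_F² = L·Tr[S₊^{2/L}] = L·k + 2∑ᵢ log sᵢ + (1/(2L))∑ᵢ(2 log sᵢ)² + O(L⁻²)`. -/
theorem stmt17 {n : ℕ} (A : Matrix (Fin n) (Fin n) ℝ) :
    ∃ C : ℝ, ∀ L : ℕ, Even L → 0 < L →
      ∃ W : ℕ → Matrix (Fin n) (Fin n) ℝ,
        matProd W L = A ∧
        (∑ ℓ ∈ Finset.Icc 1 L, ∑ i, ∑ j, (W ℓ i j) ^ 2 =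
          (L : ℝ) * ∑ i ∈ Finset.univ.filter (fun i => singularValues A i ≠ 0),
            singularValues A i ^ ((2 : ℝ) / L)) ∧
        |(L : ℝ) * (∑ i ∈ Finset.univ.filter (fun i => singularValues A i ≠ 0),
              singularValues A i ^ ((2 : ℝ) / L)) -
            ((L : ℝ) * (Finset.univ.filter (fun i => singularValues A i ≠ 0)).card +
              2 * (∑ i ∈ Finset.univ.filter (fun i => singularValues A i ≠ 0),
                Real.log (singularValues A i)) +
              (1 / (2 * (L : ℝ))) *
                ∑ i ∈ Finset.univ.filter (fun i => singularValues A i ≠ 0),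
                  (2 * Real.log (singularValues A i)) ^ 2)| ≤ C / (L : ℝ) ^ 2 := by
  refine ⟨∑ i ∈ univ.filter (fun i => singularValues A i ≠ 0),
    |2 * Real.log (singularValues A i)| ^ 3 * Real.exp |2 * Real.log (singularValues A i)|,
    fun L _ hL => ?_⟩
  obtain ⟨W, hprod, hsum⟩ := exists_matProd_eq_and_sum_sq_eq A hL
  refine ⟨W, hprod, ?_, abs_sum_mul_rpow_two_div_sub_le _ (fun i hi => ?_) (by exact_mod_cast hL)⟩
  · rw [hsum, sum_filter_singularValues_ne_zero_rpow A (by positivity)]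
    ring_nf
  · exact (Real.sqrt_nonneg _).lt_of_ne' (mem_filter.mp hi).2
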